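/- Let X be a nonempty type and let τ be a topology on the semigroup of matrix units B_λ (λ = |X|) making it a topological semigroup such that the band E(B_λ) = {(a,a) : a ∈ X} ∪ {0} is a compact subset. Then (B_λ, τ) is an absolutely H-closed topological semigroup: for every topological semigroup T and every continuous semigroup homomorphism h : B_λ → T, the image h(B_λ) is closed in T. -/
import Mathlib


open scoped Classical
open Topology

universe u v

/-- The semigroup of λ×λ-matrix units over the index type `X` (of cardinality λ):
the set `(X × X) ∪ {0}`, realized as `Option (X × X)` with `none` as the zero. -/
abbrev MatrixUnits (X : Type u) : Type u := Option (X × X)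

/-- Multiplication of matrix units: `(a,b)·(c,d) = (a,d)` if `b = c`, and `0` otherwise;
`0` is a two-sided zero. -/
noncomputable def muMul {X : Type u} : MatrixUnits X → MatrixUnits X → MatrixUnits X
  | some (a, b), some (c, d) => if b = c then some (a, d) else none
  | none, _ => none
  | some _, none => none

noncomputable instance {X : Type u} : Semigroup (MatrixUnits X) where
  mul := muMul
  mul_assoc x y z := by
    show muMul (muMul x y) z = muMul x (muMul y z)
    rcases x with _ | ⟨a, b⟩ <;> rcases y with _ | ⟨c, d⟩ <;> rcases z with _ | ⟨e, f⟩ <;>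
      simp only [muMul] <;> split_ifs <;> simp_all [muMul]

/-- The band (set of idempotents) of the semigroup of matrix units:
`{(a,a) : a ∈ X} ∪ {0}`. -/
def MUBand (X : Type u) : Set (MatrixUnits X) :=
  insert none {x : MatrixUnits X | ∃ a : X, x = some (a, a)}

section aux

variable {X : Type u}

lemma mu_mul_def (x y : MatrixUnits X) : x * y = muMul x y := rfl

lemma mu_none_mul (x : MatrixUnits X) : (none : MatrixUnits X) * x = none := rfl

lemma mu_mul_none (x : MatrixUnits X) : x * (none : MatrixUnits X) = none := by
  rcases x with _ | ⟨a, b⟩ <;> rfl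

/-- Left idempotent support map. -/
noncomputable def lidem : MatrixUnits X → MatrixUnits X
  | none => none
  | some (a, _) => some (a, a)

/-- Right idempotent support map. -/
noncomputable def ridem : MatrixUnits X → MatrixUnits X
  | none => none
  | some (_, b) => some (b, b)

lemma lidem_mul (x : MatrixUnits X) : lidem x * x = x := by
  rcases x with _ | ⟨a, b⟩ <;> simp [lidem, mu_mul_def, muMul]

lemma mul_ridem (x : MatrixUnits X) : x * ridem x = x := by
  rcases x with _ | ⟨a, b⟩ <;> simp [ridem, mu_mul_def, muMul]

lemma lidem_mem_band (x : MatrixUnits X) : lidem x ∈ MUBand X := by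
  rcases x with _ | ⟨a, b⟩
  · exact Set.mem_insert _ _
  · exact Set.mem_insert_of_mem _ ⟨a, rfl⟩

lemma ridem_mem_band (x : MatrixUnits X) : ridem x ∈ MUBand X := by
  rcases x with _ | ⟨a, b⟩
  · exact Set.mem_insert _ _
  · exact Set.mem_insert_of_mem _ ⟨b, rfl⟩

lemma band_mul_self (a : X) {x : MatrixUnits X} (hx : x ∈ MUBand X)
    (hne : x ≠ some (a, a)) : x * some (a, a) = none := by
  rcases hx with rfl | ⟨c, rfl⟩
  · rfl
  · have hca : c ≠ a := fun hc => hne (by rw [hc])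
    simp [mu_mul_def, muMul, hca]

/-- In a Hausdorff topological semigroup structure on `MatrixUnits X`, each nonzero
idempotent is isolated in the band. -/
lemma isolated_idem [TopologicalSpace (MatrixUnits X)] [T2Space (MatrixUnits X)]
    [ContinuousMul (MatrixUnits X)] (a : X) :
    some (a, a) ∉ closure (MUBand X \ {some (a, a)}) := by
  intro hmem
  set e : MatrixUnits X := some (a, a) with he
  haveI hne : (𝓝[MUBand X \ {e}] e).NeBot := mem_closure_iff_nhdsWithin_neBot.mp hmem
  have h1 : Filter.Tendsto (fun x : MatrixUnits X => x * e) (𝓝[MUBand X \ {e}] e)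
      (𝓝 (e * e)) :=
    ((continuous_id.mul continuous_const).tendsto e).mono_left nhdsWithin_le_nhds
  have h2 : ∀ᶠ x in 𝓝[MUBand X \ {e}] e, x * e = none := by
    filter_upwards [self_mem_nhdsWithin] with x hx
    exact band_mul_self a hx.1 hx.2
  have h3 : Filter.Tendsto (fun x : MatrixUnits X => x * e) (𝓝[MUBand X \ {e}] e)
      (𝓝 none) := Filter.Tendsto.congr' (Filter.EventuallyEq.symm h2) tendsto_const_nhds
  have : e * e = none := tendsto_nhds_unique h1 h3
  simp [he, mu_mul_def, muMul] at this

end aux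

/-- A topological semigroup of matrix units `B_λ` with compact band is
absolutely `H`-closed: the image of any continuous homomorphism into a topological
semigroup is closed. -/
theorem matrixUnits_absolutelyHClosed_of_compact_band
    {X : Type u} [Nonempty X]
    [TopologicalSpace (MatrixUnits X)] [T2Space (MatrixUnits X)]
    [ContinuousMul (MatrixUnits X)]
    (hband : IsCompact (MUBand X)) :
    ∀ (T : Type v) [Semigroup T] [TopologicalSpace T] [T2Space T] [ContinuousMul T]
      (h : MatrixUnits X → T),
      Continuous h →
      (∀ a b : MatrixUnits X, h (a * b) = h a * h b) →
      IsClosed (Set.range h) := by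
  intro T _ _ _ _ h hc hhom
  refine isClosed_of_closure_subset ?_
  intro t ht
  set L : Filter (MatrixUnits X) := Filter.comap h (𝓝 t) with hLdef
  haveI hLne : L.NeBot := by
    rw [Filter.comap_neBot_iff]
    intro U hU
    obtain ⟨y, hy1, x, hx⟩ := mem_closure_iff_nhds.mp ht U hU
    exact ⟨x, by rwa [hx]⟩
  have hth : Filter.Tendsto h L (𝓝 t) := Filter.tendsto_comap
  -- zero facts
  have hz0 : h none * t = h none := by
    have h1 : Filter.Tendsto (fun x => h none * h x) L (𝓝 (h none * t)) :=
      Filter.Tendsto.mul tendsto_const_nhds hth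
    have h2 : (fun x : MatrixUnits X => h none * h x) = fun _ => h none := by
      funext x; rw [← hhom, mu_none_mul]
    rw [h2] at h1
    exact tendsto_nhds_unique h1 tendsto_const_nhds
  have htz : t * h none = h none := by
    have h1 : Filter.Tendsto (fun x => h x * h none) L (𝓝 (t * h none)) :=
      Filter.Tendsto.mul hth tendsto_const_nhds
    have h2 : (fun x : MatrixUnits X => h x * h none) = fun _ => h none := by
      funext x; rw [← hhom, mu_mul_none]
    rw [h2] at h1
    exact tendsto_nhds_unique h1 tendsto_const_nhds
  -- left idempotent cluster point
  have hmapl : Filter.map lidem L ≤ Filter.principal (MUBand X) := by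
    rw [Filter.le_principal_iff, Filter.mem_map]
    have : lidem ⁻¹' MUBand X = Set.univ :=
      Set.eq_univ_of_forall fun x => lidem_mem_band x
    rw [this]; exact Filter.univ_mem
  obtain ⟨e, heB, hecl⟩ := hband hmapl
  set M : Filter (MatrixUnits X) := L ⊓ Filter.comap lidem (𝓝 e) with hMdef
  haveI hMne : M.NeBot := by
    constructor
    intro hbot
    have hpp := Filter.push_pull lidem L (𝓝 e)
    rw [← hMdef, hbot, Filter.map_bot] at hpp
    exact (Filter.NeBot.ne (by rwa [ClusterPt, inf_comm] at hecl)) hpp.symm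
  have hthM : Filter.Tendsto h M (𝓝 t) := hth.mono_left inf_le_left
  have hlM : Filter.Tendsto lidem M (𝓝 e) := Filter.tendsto_comap.mono_left inf_le_right
  have het : h e * t = t := by
    have h1 : Filter.Tendsto (fun x => h (lidem x) * h x) M (𝓝 (h e * t)) :=
      Filter.Tendsto.mul ((hc.tendsto e).comp hlM) hthM
    have h2 : (fun x : MatrixUnits X => h (lidem x) * h x) = h := by
      funext x; rw [← hhom, lidem_mul]
    rw [h2] at h1
    exact tendsto_nhds_unique h1 hthM
  rcases heB with rfl | ⟨a, rfl⟩
  · exact ⟨none, by rw [← het, hz0]⟩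
  -- e = some (a, a): eventually lidem x = e
  have hU : ∀ᶠ x in M, lidem x = some (a, a) := by
    have hopen : IsOpen (closure (MUBand X \ {some (a, a)}))ᶜ := isClosed_closure.isOpen_compl
    have hmem : some (a, a) ∈ (closure (MUBand X \ {some (a, a)}))ᶜ := isolated_idem a
    filter_upwards [hlM (hopen.mem_nhds hmem)] with x hx
    by_contra hne
    exact hx (subset_closure ⟨lidem_mem_band x, hne⟩)
  have hA : ∀ᶠ x in M, ∃ b, x = some (a, b) := by
    filter_upwards [hU] with x hx
    rcases x with _ | ⟨c, d⟩
    · simp [lidem] at hx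
    · simp only [lidem, Option.some.injEq, Prod.mk.injEq] at hx
      exact ⟨d, by rw [hx.1]⟩
  -- right idempotent cluster point
  have hmapr : Filter.map ridem M ≤ Filter.principal (MUBand X) := by
    rw [Filter.le_principal_iff, Filter.mem_map]
    have : ridem ⁻¹' MUBand X = Set.univ :=
      Set.eq_univ_of_forall fun x => ridem_mem_band x
    rw [this]; exact Filter.univ_mem
  obtain ⟨f, hfB, hfcl⟩ := hband hmapr
  set N : Filter (MatrixUnits X) := M ⊓ Filter.comap ridem (𝓝 f) with hNdef
  haveI hNne : N.NeBot := by
    constructor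
    intro hbot
    have hpp := Filter.push_pull ridem M (𝓝 f)
    rw [← hNdef, hbot, Filter.map_bot] at hpp
    exact (Filter.NeBot.ne (by rwa [ClusterPt, inf_comm] at hfcl)) hpp.symm
  have hthN : Filter.Tendsto h N (𝓝 t) := hthM.mono_left inf_le_left
  have hrN : Filter.Tendsto ridem N (𝓝 f) := Filter.tendsto_comap.mono_left inf_le_right
  have htf : t * h f = t := by
    have h1 : Filter.Tendsto (fun x => h x * h (ridem x)) N (𝓝 (t * h f)) :=
      Filter.Tendsto.mul hthN ((hc.tendsto f).comp hrN)
    have h2 : (fun x : MatrixUnits X => h x * h (ridem x)) = h := by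
      funext x; rw [← hhom, mul_ridem]
    rw [h2] at h1
    exact tendsto_nhds_unique h1 hthN
  rcases hfB with rfl | ⟨b, rfl⟩
  · exact ⟨none, by rw [← htf, htz]⟩
  -- f = some (b, b): eventually ridem x = f
  have hV : ∀ᶠ x in N, ridem x = some (b, b) := by
    have hopen : IsOpen (closure (MUBand X \ {some (b, b)}))ᶜ := isClosed_closure.isOpen_compl
    have hmem : some (b, b) ∈ (closure (MUBand X \ {some (b, b)}))ᶜ := isolated_idem b
    filter_upwards [hrN (hopen.mem_nhds hmem)] with x hx
    by_contra hne
    exact hx (subset_closure ⟨ridem_mem_band x, hne⟩)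
  have hconst : ∀ᶠ x in N, x = some (a, b) := by
    filter_upwards [hA.filter_mono inf_le_left, hV] with x hx1 hx2
    obtain ⟨d, rfl⟩ := hx1
    simp only [ridem, Option.some.injEq, Prod.mk.injEq] at hx2
    rw [hx2.1]
  have h1 : Filter.Tendsto h N (𝓝 (h (some (a, b)))) := by
    refine Filter.Tendsto.congr' ?_ (tendsto_const_nhds : Filter.Tendsto _ N (𝓝 (h (some (a, b)))))
    filter_upwards [hconst] with x hx
    rw [hx]
  exact ⟨some (a, b), tendsto_nhds_unique h1 hthN⟩
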